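/- Fix λ ∈ (0, λ₀) and r ∈ ℕ. There exist a constant K₂(λ,r) ≥ 1 and a threshold S(λ,r) ∈ ℕ, depending only on d, M₀, M₁, λ, r, with the following property. Suppose the pair (m₁,m₂) is (λ,r)-good for ω and m₂ − m₁ > S(λ,r). Then for every bounded φ : ℤ^d → [0,∞), not identically zero, with sup_{|x| > r} φ(x) ≤ sup_{|x| ≤ r} φ(x), and for all y₁, y₂ ∈ ℤ^d with |y₁| ≤ r and |y₂| ≤ r: 1/K₂(λ,r) ≤ (T^{m₁,m₂}(ω)φ)(y₁) / (T^{m₁,m₂}(ω)φ)(y₂) ≤ K₂(λ,r). -/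

import Mathlib

/-!
Up to the factor `(2d+1)^{-(m₂-m₁)}`, `T^{m₁,m₂}φ` is a sum over lazy nearest-neighbour paths.
Off the optimal path `γ*` a step gains at most `e^{M₁}` with `2d+1` choices, while along `γ*` the
path collects at least `ξ`; by the condition at `m₂` in the definition of a good pair, every block
of `ξ`'s ending near `m₂` exceeds the rate `M₁ + λ + log (2d+1)`. Splitting the paths according to
their last visit to `γ*`, the mass at time `m₂ - ρ` (with `ρ = d r + 1`) is everywhere at most a
constant times its value on `γ*`: the paths that never meet `γ*` are controlled by the maximum of
`φ` on `B_r`, which `ρ` steps carry onto `γ*`. The last `ρ` steps multiply the supremum by at most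
`((2d+1) e^{M₀})^ρ` and spread the value on `γ*` over `B_r` losing at most `e^{-ρ M₀}`.
-/

open MeasureTheory Filter

namespace BKpaper

abbrev X (d : ℕ) := Fin d → ℤ

/-- the max-norm |x| = max_i |x_i|, as a natural number -/
def nm {d : ℕ} (x : X d) : ℕ := Finset.univ.sup fun i => (x i).natAbs

/-- spin value of a boolean: `true ↦ 1`, `false ↦ -1` -/
def sgn (b : Bool) : ℝ := if b then 1 else -1

/-- ξ_m(ω) = M₀ if ω_m = 1, ξ_m(ω) = −M₁ if ω_m = −1 -/
def xi (M₀ M₁ : ℝ) (ω : ℤ → Bool) (m : ℤ) : ℝ := if ω m then M₀ else -M₁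

/-- one admissible step of the lazy random walk -/
def stepOK {d : ℕ} (x y : X d) : Prop := (∑ i, (y i - x i).natAbs) ≤ 1

/-- admissible path on the (discrete) interval [n₁, n₂] -/
def Adm {d : ℕ} (n₁ n₂ : ℤ) (γ : ℤ → X d) : Prop :=
  ∀ n : ℤ, n₁ ≤ n → n < n₂ → stepOK (γ n) (γ (n + 1))

/-- a path frozen outside [n₁,n₂]; used to represent a path on [n₁,n₂] by a
function on all of ℤ -/
def Frozen {d : ℕ} (n₁ n₂ : ℤ) (γ : ℤ → X d) : Prop :=
  (∀ n : ℤ, n ≤ n₁ → γ n = γ n₁) ∧ (∀ n : ℤ, n₂ ≤ n → γ n = γ n₂)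

/-- Φ_{n₁,n₂}(γ,ω) = Σ_{n=n₁+1}^{n₂} V(γ(n)) ω_n -/
noncomputable def Phi {d : ℕ} (V : X d → ℝ) (ω : ℤ → Bool) (n₁ n₂ : ℤ) (γ : ℤ → X d) : ℝ :=
  ∑ n ∈ Finset.Icc (n₁ + 1) n₂, V (γ n) * sgn (ω n)

/-- the Feynman–Kac operator T^{n₁,n₂}(ω) -/
noncomputable def T {d : ℕ} (V : X d → ℝ) (ω : ℤ → Bool) (n₁ n₂ : ℤ)
    (u : X d → ℝ) (x : X d) : ℝ :=
  ((2 * (d : ℝ) + 1) ^ (n₂ - n₁))⁻¹ *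
    ∑' γ : {γ : ℤ → X d // Adm n₁ n₂ γ ∧ Frozen n₁ n₂ γ ∧ γ n₂ = x},
      Real.exp (Phi V ω n₁ n₂ γ.1) * u (γ.1 n₁)

/-- the partition function Z_{n₁,n₂}(x₁,x₂) -/
noncomputable def Z {d : ℕ} (V : X d → ℝ) (ω : ℤ → Bool) (n₁ n₂ : ℤ) (x₁ x₂ : X d) : ℝ :=
  ∑' γ : {γ : ℤ → X d // Adm n₁ n₂ γ ∧ Frozen n₁ n₂ γ ∧ γ n₁ = x₁ ∧ γ n₂ = x₂},
    Real.exp (Phi V ω n₁ n₂ γ.1)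

/-- the class F(c): nonnegative bounded functions with sup φ ≤ c·φ(0) -/
def Fset (d : ℕ) (c : ℝ) : Set (X d → ℝ) :=
  {φ | (∀ x, 0 ≤ φ x) ∧ ∀ x, φ x ≤ c * φ 0}

/-- P is the i.i.d. Bernoulli(1/2) product measure on {−1,1}^ℤ ≃ ℤ → Bool -/
def IsBernoulli (P : Measure (ℤ → Bool)) : Prop :=
  IsProbabilityMeasure P ∧ ∀ (s : Finset ℤ) (f : ℤ → Bool),
    P {ω | ∀ i ∈ s, ω i = f i} = (1 / 2 : ENNReal) ^ s.card

/-- the shift θ^k -/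
def shift (k : ℤ) (ω : ℤ → Bool) : ℤ → Bool := fun n => ω (k + n)

/-- first standard basis vector e₁ of ℤ^d -/
def e1 (d : ℕ) : X d := fun i => if (i : ℕ) = 0 then 1 else 0

/-- the optimal path γ*: γ*_n = 0 if ω_n = 1, γ*_n = e₁ if ω_n = −1 -/
def gstar (d : ℕ) (ω : ℤ → Bool) : ℤ → X d := fun n => if ω n then 0 else e1 d

/-- the pair (m₁,m₂) is (λ,r)-good for ω -/
def Good (d : ℕ) (M₀ M₁ lam : ℝ) (r : ℕ) (m₁ m₂ : ℤ) (ω : ℤ → Bool) : Prop :=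
  m₁ < m₂ ∧
  (∀ j : ℤ, m₁ + 1 ≤ j → j ≤ m₁ + r → ω j = true) ∧
  (∀ k : ℕ, 1 ≤ k →
    (k : ℝ) * (M₁ + lam + Real.log (2 * (d : ℝ) + 1)) <
      ∑ j ∈ Finset.Icc (m₁ + r + 1) (m₁ + r + k), xi M₀ M₁ ω j) ∧
  (∀ j : ℤ, m₂ - r + 1 ≤ j → j ≤ m₂ → ω j = true) ∧
  (∀ k : ℕ, 1 ≤ k →
    (k : ℝ) * (M₁ + lam + Real.log (2 * (d : ℝ) + 1)) <
      ∑ j ∈ Finset.Icc (m₂ - r - k + 1) (m₂ - r), xi M₀ M₁ ω j)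

/-- the ball B_r ⊆ ℤ^d as a finite set -/
noncomputable def ball (d r : ℕ) : Finset (X d) := Fintype.piFinset fun _ => Finset.Icc (-(r : ℤ)) (r : ℤ)

lemma ball_nonempty (d r : ℕ) : (ball d r).Nonempty :=
  ⟨fun _ => 0, by simp [ball, Fintype.mem_piFinset]⟩

/-- the Hilbert projective (pseudo)metric ρ_r on functions restricted to B_r -/
noncomputable def rho (d r : ℕ) (φ ψ : X d → ℝ) : ℝ :=
  Real.log ((ball d r).sup' (ball_nonempty d r) (fun x => φ x / ψ x) *
            (ball d r).sup' (ball_nonempty d r) (fun x => ψ x / φ x))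

/-- diam_r of a set of functions w.r.t. ρ_r -/
noncomputable def diamr (d r : ℕ) (A : Set (X d → ℝ)) : ℝ :=
  sSup {y | ∃ φ ∈ A, ∃ ψ ∈ A, y = rho d r φ ψ}

/-- the set G(λ,r) (with K₁ explicit): φ ∈ F(2K₁) with sup_{|x|>r} φ ≤ sup_{|x|≤r} φ -/
def Gset (d : ℕ) (K₁ : ℝ) (r : ℕ) : Set (X d → ℝ) :=
  {φ | φ ∈ Fset d (2 * K₁) ∧ ∀ x, r < nm x → ∃ z, nm z ≤ r ∧ φ x ≤ φ z}

/-- the set H(λ,r) (with K₁, K₂ explicit) -/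
def Hset (d : ℕ) (K₁ K₂ : ℝ) (r : ℕ) : Set (X d → ℝ) :=
  {φ | φ ∈ Gset d K₁ r ∧ (⨆ x, φ x) = 1 ∧ ∀ y, nm y ≤ r → 1 / K₂ ≤ φ y}

/-- finite-volume Gibbs measure on [n₁,n₂] for ω (paths represented as
functions ℤ → ℤ^d frozen outside [n₁,n₂]) -/
def FVGibbs (d : ℕ) (V : X d → ℝ) (ω : ℤ → Bool) (n₁ n₂ : ℤ)
    (μ : Measure (ℤ → X d)) : Prop :=
  IsProbabilityMeasure μ ∧
  μ {γ | Adm n₁ n₂ γ ∧ Frozen n₁ n₂ γ} = 1 ∧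
  ∀ γ : ℤ → X d, Adm n₁ n₂ γ →
    μ {α | α n₁ = γ n₁ ∧ α n₂ = γ n₂} ≠ 0 →
    μ {α | ∀ n : ℤ, n₁ ≤ n → n ≤ n₂ → α n = γ n} =
      ENNReal.ofReal (Real.exp (Phi V ω n₁ n₂ γ) / Z V ω n₁ n₂ (γ n₁) (γ n₂)) *
        μ {α | α n₁ = γ n₁ ∧ α n₂ = γ n₂}

/-- (infinite-volume) Gibbs measure for ω -/
def GibbsMeasure (d : ℕ) (V : X d → ℝ) (ω : ℤ → Bool) (μ : Measure (ℤ → X d)) : Prop :=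
  IsProbabilityMeasure μ ∧
  μ {α | ∀ n : ℤ, stepOK (α n) (α (n + 1))} = 1 ∧
  ∀ n₁ n₂ : ℤ, n₁ < n₂ → ∀ γ : ℤ → X d, Adm n₁ n₂ γ →
    μ {α | α n₁ = γ n₁ ∧ α n₂ = γ n₂} ≠ 0 →
    μ {α | ∀ n : ℤ, n₁ ≤ n → n ≤ n₂ → α n = γ n} =
      ENNReal.ofReal (Real.exp (Phi V ω n₁ n₂ γ) / Z V ω n₁ n₂ (γ n₁) (γ n₂)) *
        μ {α | α n₁ = γ n₁ ∧ α n₂ = γ n₂}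

/-- the weak localization condition for a measure on two-sided paths -/
def WeakLoc (d : ℕ) (μ : Measure (ℤ → X d)) : Prop :=
  ∀ ε : ℝ, 0 < ε → ∃ r : ℕ,
    Filter.liminf (fun n : ℤ => μ {α | r < nm (α n)}) Filter.atTop < ENNReal.ofReal ε ∧
    Filter.liminf (fun n : ℤ => μ {α | r < nm (α n)}) Filter.atBot < ENNReal.ofReal ε

/-- normalized positive eigenfunction of the cocycle T -/
def IsEigen (d : ℕ) (V : X d → ℝ) (P : Measure (ℤ → Bool))
    (u : (ℤ → Bool) → X d → ℝ) : Prop :=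
  (∀ x : X d, Measurable fun ω => u ω x) ∧
  ∀ᵐ ω ∂P, (∀ x, 0 < u ω x) ∧ BddAbove (Set.range (u ω)) ∧ (⨆ x, u ω x) = 1 ∧
    ∃ κ : ℝ, 0 < κ ∧ ∀ x, T V ω 0 1 (u ω) x = κ * u (shift 1 ω) x


open Finset Real

section Lattice

variable {d : ℕ}

def l1 (x : X d) : ℕ := ∑ i, (x i).natAbs

lemma natAbs_le_l1 (x : X d) (i : Fin d) : (x i).natAbs ≤ l1 x :=
  single_le_sum (f := fun i => (x i).natAbs) (fun _ _ => Nat.zero_le _) (mem_univ i)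

lemma l1_sub_le (x y : X d) : l1 (x - y) ≤ l1 x + l1 y := by
  rw [l1, l1, l1, ← sum_add_distrib]
  exact sum_le_sum fun i _ => Int.natAbs_sub_le (x i) (y i)

lemma l1_le_of_nm_le {x : X d} {r : ℕ} (h : nm x ≤ r) : l1 x ≤ d * r := by
  rw [nm, Finset.sup_le_iff] at h
  unfold l1
  simpa using sum_le_card_nsmul univ (fun i => (x i).natAbs) r h

lemma eq_of_l1_sub_eq_zero {x y : X d} (h : l1 (x - y) = 0) : x = y := by
  funext i
  have := natAbs_le_l1 (x - y) i
  simp only [Pi.sub_apply] at this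
  omega

lemma mem_ball_iff {x : X d} {r : ℕ} : x ∈ ball d r ↔ nm x ≤ r := by
  simp only [ball, Fintype.mem_piFinset, mem_Icc, nm, Finset.sup_le_iff, mem_univ,
    forall_const]
  exact forall_congr' fun i => by omega

lemma l1_e1_le (d : ℕ) : l1 (e1 d) ≤ 1 := by
  cases d with
  | zero => simp [l1]
  | succ n => simp [l1, e1, Fin.sum_univ_succ]

lemma l1_gstar_le (ω : ℤ → Bool) (n : ℤ) : l1 (gstar d ω n) ≤ 1 := by
  unfold gstar
  split_ifs
  · simp [l1]
  · exact l1_e1_le d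

lemma stepOK_gstar (ω : ℤ → Bool) (n n' : ℤ) : stepOK (gstar d ω n) (gstar d ω n') := by
  refine le_trans (sum_le_sum fun i _ => ?_) (l1_e1_le d)
  unfold gstar
  split_ifs <;> simp

noncomputable def nbr (x : X d) : Finset (X d) :=
  (Fintype.piFinset fun i => Icc (x i - 1) (x i + 1)).filter fun z => l1 (x - z) ≤ 1

lemma mem_nbr {x z : X d} : z ∈ nbr x ↔ stepOK z x := by
  refine ⟨fun h => (mem_filter.1 h).2, fun h => mem_filter.2 ⟨?_, h⟩⟩
  refine Fintype.mem_piFinset.2 fun i => ?_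
  have : (x i - z i).natAbs ≤ 1 := le_trans (natAbs_le_l1 (x - z) i) h
  rw [mem_Icc]
  omega

lemma stepOK_self (x : X d) : stepOK x x := by
  simp [stepOK]

def unitStep (x : X d) (i : Fin d) (b : Bool) : X d :=
  Function.update x i (if b then x i + 1 else x i - 1)

lemma eq_unitStep_of_stepOK {x z : X d} (h : stepOK z x) (hne : z ≠ x) :
    ∃ i b, z = unitStep x i b := by
  obtain ⟨i, hi⟩ : ∃ i, z i ≠ x i := by
    by_contra! hc
    exact hne (funext hc)
  have hi1 : (x i - z i).natAbs ≤ 1 := le_trans (natAbs_le_l1 (x - z) i) h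
  refine ⟨i, decide (x i < z i), funext fun j => ?_⟩
  rcases eq_or_ne j i with rfl | hj
  · simp only [unitStep, Function.update_self, decide_eq_true_eq]
    split_ifs <;> omega
  · have h2 := add_le_sum (f := fun k => (x k - z k).natAbs) (fun _ _ => Nat.zero_le _)
      (mem_univ i) (mem_univ j) hj.symm
    have h' : l1 (x - z) ≤ 1 := h
    have : (x j - z j).natAbs = 0 := by
      change _ ≤ l1 (x - z) at h2
      omega
    rw [unitStep, Function.update_of_ne hj]
    omega

lemma card_nbr_le (x : X d) : (nbr x).card ≤ 2 * d + 1 := by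
  classical
  have hsub : nbr x ⊆ insert x (univ.image fun p : Fin d × Bool => unitStep x p.1 p.2) := by
    intro z hz
    rcases eq_or_ne z x with rfl | hne
    · exact mem_insert_self _ _
    · obtain ⟨i, b, rfl⟩ := eq_unitStep_of_stepOK (mem_nbr.1 hz) hne
      exact mem_insert_of_mem (mem_image_of_mem _ (mem_univ (i, b)))
  calc (nbr x).card ≤ _ := card_le_card hsub
    _ ≤ _ := card_insert_le _ _
    _ ≤ (univ : Finset (Fin d × Bool)).card + 1 := by gcongr; exact card_image_le
    _ = 2 * d + 1 := by simp [mul_comm]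

lemma exists_stepOK_l1_sub_le {y z : X d} {k : ℕ} (h : l1 (y - z) ≤ k + 1) :
    ∃ y', stepOK y' y ∧ l1 (y' - z) ≤ k := by
  by_cases hk : l1 (y - z) ≤ k
  · exact ⟨y, stepOK_self y, hk⟩
  obtain ⟨i, hi⟩ : ∃ i, y i ≠ z i := by
    by_contra! hc
    simp [l1, hc] at hk
  have hstep : ∀ j, (unitStep y i (decide (y i < z i)) j - z j).natAbs ≤ (y j - z j).natAbs ∧
      (j = i → (unitStep y i (decide (y i < z i)) j - z j).natAbs < (y j - z j).natAbs) ∧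
      (j ≠ i → unitStep y i (decide (y i < z i)) j = y j) := by
    intro j
    rcases eq_or_ne j i with rfl | hj
    · simp only [unitStep, Function.update_self, decide_eq_true_eq]
      split_ifs <;> omega
    · simp [unitStep, hj]
  refine ⟨unitStep y i (decide (y i < z i)), ?_, ?_⟩
  · show l1 (y - _) ≤ 1
    rw [l1, sum_eq_single_of_mem i (mem_univ i) fun j _ hj => by
      simp [(hstep j).2.2 hj]]
    simp only [Pi.sub_apply, unitStep, Function.update_self, decide_eq_true_eq]
    split_ifs <;> omega
  · have : l1 (unitStep y i (decide (y i < z i)) - z) < l1 (y - z) :=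
      sum_lt_sum (fun j _ => (hstep j).1) ⟨i, mem_univ i, (hstep i).2.1 rfl⟩
    omega

end Lattice

section PathSum

variable {d : ℕ}

/-- The sum, over the lazy nearest-neighbour paths `γ` of length `k` ending at `x`, of
`exp (∑_{n=1}^k w n (γ n)) * u (γ 0)`, computed by recursion on the last step. -/
noncomputable def pathSum (w : ℕ → X d → ℝ) (u : X d → ℝ) : ℕ → X d → ℝ
  | 0, x => u x
  | k + 1, x => exp (w (k + 1) x) * ∑ z ∈ nbr x, pathSum w u k z

variable {w : ℕ → X d → ℝ} {u : X d → ℝ}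

lemma pathSum_nonneg (hu : ∀ x, 0 ≤ u x) : ∀ k x, 0 ≤ pathSum w u k x
  | 0, x => hu x
  | k + 1, _ => mul_nonneg (exp_pos _).le (sum_nonneg fun z _ => pathSum_nonneg hu k z)

lemma exp_mul_le_pathSum_succ (hu : ∀ x, 0 ≤ u x) {k : ℕ} {x z : X d} (hz : stepOK z x) :
    exp (w (k + 1) x) * pathSum w u k z ≤ pathSum w u (k + 1) x :=
  mul_le_mul_of_nonneg_left
    (single_le_sum (fun z _ => pathSum_nonneg hu k z) (mem_nbr.2 hz)) (exp_pos _).le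

lemma pathSum_succ_le (hu : ∀ x, 0 ≤ u x) {k : ℕ} {x : X d} {C W : ℝ}
    (hC : ∀ z, pathSum w u k z ≤ C) (hW : w (k + 1) x ≤ W) :
    pathSum w u (k + 1) x ≤ (2 * d + 1) * exp W * C := by
  have hC0 : 0 ≤ C := (pathSum_nonneg hu k x).trans (hC x)
  have hsum : ∑ z ∈ nbr x, pathSum w u k z ≤ (2 * d + 1) * C :=
    calc ∑ z ∈ nbr x, pathSum w u k z ≤ (nbr x).card • C := sum_le_card_nsmul _ _ _ fun z _ => hC z
      _ ≤ (2 * d + 1) * C := by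
        rw [nsmul_eq_mul]
        gcongr
        exact_mod_cast card_nbr_le x
  calc pathSum w u (k + 1) x ≤ exp W * ((2 * d + 1) * C) :=
        mul_le_mul (exp_le_exp.2 hW) hsum (sum_nonneg fun z _ => pathSum_nonneg hu k z)
          (exp_pos _).le
    _ = (2 * d + 1) * exp W * C := by ring

lemma exp_sum_mul_le_pathSum_along (hu : ∀ x, 0 ≤ u x) {g : ℕ → X d}
    (hg : ∀ n, stepOK (g n) (g (n + 1))) {a : ℕ → ℝ} (ha : ∀ n, a n ≤ w n (g n))
    {j k : ℕ} (hjk : j ≤ k) :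
    exp (∑ n ∈ Ioc j k, a n) * pathSum w u j (g j) ≤ pathSum w u k (g k) := by
  induction k, hjk using Nat.le_induction with
  | base => simp
  | succ k hjk ih =>
    rw [sum_Ioc_succ_top hjk, exp_add, mul_comm (exp _), mul_assoc]
    calc exp (a (k + 1)) * (exp (∑ n ∈ Ioc j k, a n) * pathSum w u j (g j))
        ≤ exp (w (k + 1) (g (k + 1))) * pathSum w u k (g k) :=
          mul_le_mul (exp_le_exp.2 (ha _)) ih
            (mul_nonneg (exp_pos _).le (pathSum_nonneg hu _ _)) (exp_pos _).le
      _ ≤ pathSum w u (k + 1) (g (k + 1)) := exp_mul_le_pathSum_succ hu (hg k)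

lemma pathSum_le_exp_mul_pathSum_add (hu : ∀ x, 0 ≤ u x) {M : ℝ} (hw : ∀ n x, -M ≤ w n x)
    (j : ℕ) : ∀ (k : ℕ) (y z : X d), l1 (y - z) ≤ k →
      pathSum w u j z ≤ exp (k * M) * pathSum w u (j + k) y := by
  intro k
  induction k with
  | zero =>
    intro y z h
    obtain rfl := eq_of_l1_sub_eq_zero (Nat.le_zero.1 h)
    simp
  | succ k ih =>
    intro y z h
    obtain ⟨y', hy', hdist⟩ := exists_stepOK_l1_sub_le h
    have hstep : pathSum w u (j + k) y' ≤ exp M * (exp (w (j + k + 1) y) * pathSum w u (j + k) y') := by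
      rw [← mul_assoc, ← exp_add]
      exact le_mul_of_one_le_left (pathSum_nonneg hu _ _)
        (one_le_exp (by linarith [hw (j + k + 1) y]))
    calc pathSum w u j z ≤ exp (k * M) * pathSum w u (j + k) y' := ih y' z hdist
      _ ≤ exp (k * M) * (exp M * pathSum w u (j + (k + 1)) y) := by
        gcongr
        exact hstep.trans (mul_le_mul_of_nonneg_left (exp_mul_le_pathSum_succ hu hy') (exp_pos _).le)
      _ = exp ((k + 1 : ℕ) * M) * pathSum w u (j + (k + 1)) y := by
        rw [Nat.cast_succ, add_one_mul, exp_add, mul_assoc]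

/-- A path either never meets `g`, or it meets it for the last time `i` steps before the end. -/
lemma pathSum_le_last_visit (hu : ∀ x, 0 ≤ u x) {c : ℝ} (huc : ∀ x, u x ≤ c) {g : ℕ → X d}
    {M₁ : ℝ} (hw : ∀ n x, x ≠ g n → w n x ≤ M₁) :
    ∀ k x, pathSum w u k x ≤ c * ((2 * d + 1) * exp M₁) ^ k +
      ∑ i ∈ range k, ((2 * d + 1) * exp M₁) ^ i * pathSum w u (k - i) (g (k - i)) := by
  set β : ℝ := (2 * d + 1) * exp M₁
  have hc : 0 ≤ c := (hu 0).trans (huc 0)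
  intro k
  induction k with
  | zero => intro x; simpa [pathSum] using huc x
  | succ k ih =>
    intro x
    have hB : 0 ≤ c * β ^ k + ∑ i ∈ range k, β ^ i * pathSum w u (k - i) (g (k - i)) := by
      linarith [ih x, pathSum_nonneg (w := w) hu k x]
    have hrec : c * β ^ (k + 1) + ∑ i ∈ range (k + 1), β ^ i * pathSum w u (k + 1 - i) (g (k + 1 - i))
        = β * (c * β ^ k + ∑ i ∈ range k, β ^ i * pathSum w u (k - i) (g (k - i)))
          + pathSum w u (k + 1) (g (k + 1)) := by
      rw [sum_range_succ', mul_add, mul_sum]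
      simp only [Nat.add_sub_add_right, Nat.sub_zero, pow_succ]
      ring_nf
    rw [hrec]
    by_cases hx : x = g (k + 1)
    · subst hx
      nlinarith [show 0 ≤ β by positivity]
    · have := pathSum_succ_le hu ih (hw (k + 1) x hx)
      nlinarith [show 0 ≤ β by positivity, pathSum_nonneg (w := w) hu (k + 1) (g (k + 1))]

lemma pathSum_add_le (hu : ∀ x, 0 ≤ u x) {M : ℝ} (hw : ∀ n x, w n x ≤ M) {K : ℕ} {U : ℝ}
    (hU : ∀ x, pathSum w u K x ≤ U) :
    ∀ k x, pathSum w u (K + k) x ≤ ((2 * d + 1) * exp M) ^ k * U := by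
  intro k
  induction k with
  | zero => simpa using hU
  | succ k ih =>
    intro x
    calc pathSum w u (K + k + 1) x ≤ (2 * d + 1) * exp M * (((2 * d + 1) * exp M) ^ k * U) :=
          pathSum_succ_le hu ih (hw _ _)
      _ = ((2 * d + 1) * exp M) ^ (k + 1) * U := by ring

end PathSum

section Paths

variable {d : ℕ}

def IsPathTo (n₁ n₂ : ℤ) (x : X d) (γ : ℤ → X d) : Prop :=
  Adm n₁ n₂ γ ∧ Frozen n₁ n₂ γ ∧ γ n₂ = x

def extendPath (m : ℤ) (x : X d) (γ : ℤ → X d) : ℤ → X d := fun n => if n ≤ m then γ n else x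

def truncPath (m : ℤ) (γ : ℤ → X d) : ℤ → X d := fun n => γ (min n m)

variable {m₁ m : ℤ} {x z : X d} {γ : ℤ → X d}

lemma IsPathTo.extend (hγ : IsPathTo m₁ m z γ) (hm : m₁ ≤ m) (hz : stepOK z x) :
    IsPathTo m₁ (m + 1) x (extendPath m x γ) := by
  obtain ⟨hA, ⟨hF₁, -⟩, rfl⟩ := hγ
  refine ⟨fun n h1 h2 => ?_, ⟨fun n hn => ?_, fun n hn => ?_⟩, ?_⟩
  · simp only [extendPath]
    rcases (Int.lt_add_one_iff.1 h2).lt_or_eq with h | rfl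
    · rw [if_pos h.le, if_pos (by omega)]
      exact hA n h1 h
    · rw [if_pos le_rfl, if_neg (by omega)]
      exact hz
  · simp only [extendPath, if_pos (hn.trans hm), if_pos hm, hF₁ n hn]
  · simp only [extendPath, if_neg (show ¬n ≤ m by omega),
      if_neg (show ¬m + 1 ≤ m by omega)]
  · simp [extendPath]

lemma IsPathTo.trunc (hγ : IsPathTo m₁ (m + 1) x γ) (hm : m₁ ≤ m) :
    IsPathTo m₁ m (γ m) (truncPath m γ) := by
  obtain ⟨hA, ⟨hF₁, -⟩, -⟩ := hγ
  refine ⟨fun n h1 h2 => ?_, ⟨fun n hn => ?_, fun n hn => ?_⟩, ?_⟩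
  · simp only [truncPath, min_eq_left h2.le, min_eq_left (show n + 1 ≤ m by omega)]
    exact hA n h1 (by omega)
  · simp only [truncPath, min_eq_left (hn.trans hm), min_eq_left hm, hF₁ n hn]
  · simp only [truncPath, min_eq_right hn, min_self]
  · simp [truncPath]

lemma IsPathTo.stepOK (hγ : IsPathTo m₁ (m + 1) x γ) (hm : m₁ ≤ m) : stepOK (γ m) x :=
  hγ.2.2 ▸ hγ.1 m hm (lt_add_one m)

lemma IsPathTo.extend_trunc (hγ : IsPathTo m₁ (m + 1) x γ) :
    extendPath m x (truncPath m γ) = γ := by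
  funext n
  by_cases hn : n ≤ m
  · simp [extendPath, truncPath, hn]
  · simp only [extendPath, if_neg hn]
    rw [hγ.2.1.2 n (by omega), hγ.2.2]

lemma IsPathTo.trunc_extend (hγ : IsPathTo m₁ m z γ) :
    truncPath m (extendPath m x γ) = γ := by
  funext n
  simp only [truncPath, extendPath, if_pos (min_le_right n m)]
  rcases le_total n m with hn | hn
  · rw [min_eq_left hn]
  · rw [min_eq_right hn, hγ.2.1.2 n hn]

open Classical in
noncomputable def paths (m₁ : ℤ) : ℕ → X d → Finset (ℤ → X d)
  | 0, x => {fun _ => x}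
  | k + 1, x => (nbr x).biUnion fun z => (paths m₁ k z).image (extendPath (m₁ + k) x)

open Classical in
lemma mem_paths : ∀ {k : ℕ} {x : X d} {γ : ℤ → X d},
    γ ∈ paths m₁ k x ↔ IsPathTo m₁ (m₁ + k) x γ
  | 0, x, γ => by
    simp only [paths, mem_singleton, Nat.cast_zero, add_zero]
    constructor
    · rintro rfl
      exact ⟨fun n h1 h2 => absurd h2 (by omega), ⟨fun _ _ => rfl, fun _ _ => rfl⟩, rfl⟩
    · rintro ⟨-, ⟨hF₁, hF₂⟩, rfl⟩
      funext n
      rcases le_total n m₁ with hn | hn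
      exacts [hF₁ n hn, hF₂ n hn]
  | k + 1, x, γ => by
    rw [paths, mem_biUnion, Nat.cast_succ, ← add_assoc]
    constructor
    · rintro ⟨z, hz, hγ⟩
      obtain ⟨γ', hγ', rfl⟩ := mem_image.1 hγ
      exact (mem_paths.1 hγ').extend (by omega) (mem_nbr.1 hz)
    · intro hγ
      refine ⟨γ (m₁ + k), mem_nbr.2 (hγ.stepOK (by omega)), mem_image.2 ⟨truncPath (m₁ + k) γ,
        mem_paths.2 (hγ.trunc (by omega)), hγ.extend_trunc⟩⟩

def weight (V : X d → ℝ) (ω : ℤ → Bool) (m₁ : ℤ) (n : ℕ) (x : X d) : ℝ := V x * sgn (ω (m₁ + n))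

lemma Phi_extendPath (V : X d → ℝ) (ω : ℤ → Bool) (hm : m₁ ≤ m) :
    Phi V ω m₁ (m + 1) (extendPath m x γ) = Phi V ω m₁ m γ + V x * sgn (ω (m + 1)) := by
  rw [Phi, ← insert_Icc_right_eq_Icc_add_one (by omega), sum_insert (by simp), add_comm, Phi]
  congr 1
  · refine sum_congr rfl fun n hn => ?_
    rw [extendPath, if_pos (mem_Icc.1 hn).2]
  · simp [extendPath]

open Classical in
lemma sum_paths_eq_pathSum (V : X d → ℝ) (ω : ℤ → Bool) (u : X d → ℝ) :
    ∀ (k : ℕ) (x : X d), ∑ γ ∈ paths m₁ k x, exp (Phi V ω m₁ (m₁ + k) γ) * u (γ m₁) =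
      pathSum (weight V ω m₁) u k x
  | 0, x => by simp [paths, Phi, pathSum]
  | k + 1, x => by
    rw [Nat.cast_succ, ← add_assoc, paths, sum_biUnion, pathSum, mul_sum]
    · refine sum_congr rfl fun z _ => ?_
      rw [sum_image, ← sum_paths_eq_pathSum V ω u k z, mul_sum]
      · refine sum_congr rfl fun γ hγ => ?_
        have hstart : extendPath (m₁ + k) x γ m₁ = γ m₁ := if_pos (by omega)
        rw [Phi_extendPath V ω (by omega), exp_add, weight, Nat.cast_succ, ← add_assoc, hstart]
        ring
      · intro γ₁ h₁ γ₂ h₂ h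
        rw [← (mem_paths.1 h₁).trunc_extend (x := x), h, (mem_paths.1 h₂).trunc_extend]
    · intro z₁ _ z₂ _ hne
      refine disjoint_left.2 fun γ h₁ h₂ => hne ?_
      obtain ⟨γ₁, hγ₁, rfl⟩ := mem_image.1 h₁
      obtain ⟨γ₂, hγ₂, h⟩ := mem_image.1 h₂
      have := congrFun h (m₁ + k)
      simp only [extendPath, le_refl, if_true] at this
      rw [← (mem_paths.1 hγ₁).2.2, ← (mem_paths.1 hγ₂).2.2, this]

lemma T_eq_pathSum (V : X d → ℝ) (ω : ℤ → Bool) (k : ℕ) (u : X d → ℝ) (x : X d) :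
    T V ω m₁ (m₁ + k) u x = ((2 * (d : ℝ) + 1) ^ k)⁻¹ * pathSum (weight V ω m₁) u k x := by
  rw [T, add_sub_cancel_left, zpow_natCast, ← sum_paths_eq_pathSum,
    ← tsum_subtype' (paths m₁ k x) fun γ => exp (Phi V ω m₁ (m₁ + k) γ) * u (γ m₁)]
  congr 1
  exact (Equiv.subtypeEquivRight fun γ => mem_paths.symm).tsum_eq
    fun γ => exp (Phi V ω m₁ (m₁ + k) γ.1) * u (γ.1 m₁)

end Paths

section Estimates

variable {d : ℕ}

def GoodEnd (a : ℕ → ℝ) (L : ℝ) (R : ℕ) : Prop :=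
  ∀ j < R, ((R - j : ℕ) : ℝ) * L < ∑ n ∈ Ioc j R, a n

structure PeaksAlong (w : ℕ → X d → ℝ) (g : ℕ → X d) (a : ℕ → ℝ) (M₀ M₁ : ℝ) : Prop where
  step : ∀ n, stepOK (g n) (g (n + 1))
  le_along : ∀ n, a n ≤ w n (g n)
  abs_le : ∀ n x, |w n x| ≤ M₀
  le_off : ∀ n x, x ≠ g n → w n x ≤ M₁

noncomputable def rate (d : ℕ) (M₁ lam : ℝ) : ℝ := M₁ + lam + log (2 * d + 1)

lemma rate_nonneg {M₁ lam : ℝ} (hM₁ : 0 ≤ M₁) (hlam : 0 ≤ lam) : 0 ≤ rate d M₁ lam := by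
  have : 0 ≤ log (2 * (d : ℝ) + 1) := log_nonneg (by linarith [(Nat.cast_nonneg d : (0 : ℝ) ≤ d)])
  unfold rate
  linarith

lemma mul_exp_eq_exp_rate_sub {M₁ lam : ℝ} :
    (2 * d + 1) * exp M₁ = exp (rate d M₁ lam - lam) := by
  rw [rate, show M₁ + lam + log (2 * (d : ℝ) + 1) - lam = M₁ + log (2 * d + 1) by ring, exp_add,
    exp_log (by positivity), mul_comm]

variable {w : ℕ → X d → ℝ} {u : X d → ℝ} {g : ℕ → X d} {a : ℕ → ℝ} {M₀ M₁ L lam : ℝ}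
  {R K ρ : ℕ}

lemma PeaksAlong.neg_le (hw : PeaksAlong w g a M₀ M₁) (n : ℕ) (x : X d) : -M₀ ≤ w n x :=
  (_root_.abs_le.1 (hw.abs_le n x)).1

lemma PeaksAlong.le (hw : PeaksAlong w g a M₀ M₁) (n : ℕ) (x : X d) : w n x ≤ M₀ :=
  (_root_.abs_le.1 (hw.abs_le n x)).2

lemma PeaksAlong.nonneg (hw : PeaksAlong w g a M₀ M₁) : 0 ≤ M₀ :=
  (abs_nonneg _).trans (hw.abs_le 0 0)

lemma GoodEnd.le_sum_Ioc (h : GoodEnd a L R) (ha : ∀ n, a n ≤ M₀) (hL : 0 ≤ L) {j : ℕ}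
    (hjK : j ≤ K) (hKR : K < R) :
    ((K : ℝ) - j) * L - ((R : ℝ) - K) * M₀ ≤ ∑ n ∈ Ioc j K, a n := by
  have hjR := h j (by omega)
  rw [← sum_Ioc_consecutive a hjK hKR.le, Nat.cast_sub (by omega)] at hjR
  have htail : ∑ n ∈ Ioc K R, a n ≤ ((R : ℝ) - K) * M₀ := by
    have := sum_le_card_nsmul (Ioc K R) a M₀ fun n _ => ha n
    rwa [Nat.card_Ioc, nsmul_eq_mul, Nat.cast_sub hKR.le] at this
  have hKj : ((K : ℝ) - j) * L ≤ ((R : ℝ) - j) * L := by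
    gcongr
  linarith

lemma pathSum_along_le (hu : ∀ x, 0 ≤ u x) (hw : PeaksAlong w g a M₀ M₁) (hL : 0 ≤ L)
    (h : GoodEnd a L R) {j : ℕ} (hjK : j ≤ K) (hKR : K < R) :
    pathSum w u j (g j) ≤ exp (((R : ℝ) - K) * M₀ - ((K : ℝ) - j) * L) * pathSum w u K (g K) := by
  set s := ∑ n ∈ Ioc j K, a n
  have hchain : exp s * pathSum w u j (g j) ≤ pathSum w u K (g K) :=
    exp_sum_mul_le_pathSum_along hu hw.step hw.le_along hjK
  have hs := h.le_sum_Ioc (fun n => (hw.le_along n).trans (hw.le n _)) hL hjK hKR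
  calc pathSum w u j (g j) = exp (-s) * (exp s * pathSum w u j (g j)) := by
        rw [← mul_assoc, ← exp_add, neg_add_cancel, exp_zero, one_mul]
    _ ≤ exp (((R : ℝ) - K) * M₀ - ((K : ℝ) - j) * L) * pathSum w u K (g K) :=
        mul_le_mul (exp_le_exp.2 (by linarith)) hchain
          (mul_nonneg (exp_pos _).le (pathSum_nonneg hu _ _)) (exp_pos _).le

lemma mul_pow_le_of_goodEnd (hu : ∀ x, 0 ≤ u x) (hw : PeaksAlong w g a M₀ M₁) (hM₁ : 0 ≤ M₁)
    (hlam : 0 < lam) (h : GoodEnd a (rate d M₁ lam) R) (hρK : ρ ≤ K) (hKR : K < R)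
    (hRK : R ≤ K + ρ) {z₀ : X d} (hz₀ : l1 (g ρ - z₀) ≤ ρ) :
    u z₀ * ((2 * d + 1) * exp M₁) ^ K ≤
      exp (ρ * (2 * M₀ + rate d M₁ lam)) * pathSum w u K (g K) := by
  set L := rate d M₁ lam
  have hL : 0 ≤ L := rate_nonneg hM₁ hlam.le
  have hM₀ := hw.nonneg
  have hstart : u z₀ ≤ exp (ρ * M₀) * pathSum w u ρ (g ρ) := by
    simpa [pathSum] using pathSum_le_exp_mul_pathSum_add hu hw.neg_le 0 ρ (g ρ) z₀ hz₀
  have hmid := pathSum_along_le hu hw hL h hρK hKR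
  have hR : (R : ℝ) ≤ K + ρ := by exact_mod_cast hRK
  have hρ : (ρ : ℝ) ≤ K := by exact_mod_cast hρK
  rw [mul_exp_eq_exp_rate_sub (lam := lam), ← exp_nat_mul]
  calc u z₀ * exp (K * (L - lam))
      ≤ exp (ρ * M₀) * (exp ((R - K) * M₀ - (K - ρ) * L) * pathSum w u K (g K)) *
          exp (K * (L - lam)) := by
        gcongr
        exact hstart.trans (by gcongr)
    _ = exp (ρ * M₀ + (R - K) * M₀ + ρ * L - K * lam) * pathSum w u K (g K) := by
        rw [← mul_assoc, mul_right_comm, ← exp_add, ← exp_add]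
        ring_nf
    _ ≤ exp (ρ * (2 * M₀ + L)) * pathSum w u K (g K) := by
        have := pathSum_nonneg (w := w) hu K (g K)
        gcongr
        nlinarith [mul_nonneg (Nat.cast_nonneg K : (0 : ℝ) ≤ K) hlam.le,
          mul_nonneg (sub_nonneg.2 hR) hM₀]

lemma sum_pow_mul_pathSum_le (hu : ∀ x, 0 ≤ u x) (hw : PeaksAlong w g a M₀ M₁) (hM₁ : 0 ≤ M₁)
    (hlam : 0 < lam) (h : GoodEnd a (rate d M₁ lam) R) (hKR : K < R) (hRK : R ≤ K + ρ) :
    ∑ i ∈ range K, ((2 * d + 1) * exp M₁) ^ i * pathSum w u (K - i) (g (K - i)) ≤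
      exp (ρ * M₀) * (1 - exp (-lam))⁻¹ * pathSum w u K (g K) := by
  set L := rate d M₁ lam
  set G := pathSum w u K (g K)
  have hG : 0 ≤ G := pathSum_nonneg hu _ _
  have hR : (R : ℝ) ≤ K + ρ := by exact_mod_cast hRK
  have hterm : ∀ i ∈ range K, ((2 * d + 1) * exp M₁) ^ i * pathSum w u (K - i) (g (K - i)) ≤
      exp (ρ * M₀) * G * exp (-lam) ^ i := by
    intro i hi
    have hiK : i ≤ K := (mem_range.1 hi).le
    have hpath := pathSum_along_le hu hw (rate_nonneg hM₁ hlam.le) h (Nat.sub_le K i) hKR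
    rw [Nat.cast_sub hiK, sub_sub_cancel] at hpath
    rw [mul_exp_eq_exp_rate_sub (lam := lam), ← exp_nat_mul, ← exp_nat_mul]
    calc exp (i * (L - lam)) * pathSum w u (K - i) (g (K - i))
        ≤ exp (i * (L - lam)) * (exp ((R - K) * M₀ - i * L) * G) := by gcongr
      _ = exp ((R - K) * M₀) * G * exp (i * -lam) := by
        rw [← mul_assoc, ← exp_add, mul_right_comm, ← exp_add]
        ring_nf
      _ ≤ exp (ρ * M₀) * G * exp (i * -lam) := by
        have := hw.nonneg
        gcongr
        linarith
  have hgeom : ∑ i ∈ range K, exp (-lam) ^ i ≤ (1 - exp (-lam))⁻¹ := by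
    have := geom_sum_Ico_le_of_lt_one (m := 0) (n := K) (exp_pos (-lam)).le
      (exp_lt_one_iff.2 (by linarith))
    rwa [← range_eq_Ico, pow_zero, one_div] at this
  calc _ ≤ ∑ i ∈ range K, exp (ρ * M₀) * G * exp (-lam) ^ i := sum_le_sum hterm
    _ = exp (ρ * M₀) * G * ∑ i ∈ range K, exp (-lam) ^ i := (mul_sum _ _ _).symm
    _ ≤ exp (ρ * M₀) * (1 - exp (-lam))⁻¹ * G := by
      rw [mul_right_comm]
      gcongr

lemma pathSum_le_mul_along (hu : ∀ x, 0 ≤ u x) (hw : PeaksAlong w g a M₀ M₁) (hM₁ : 0 ≤ M₁)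
    (hlam : 0 < lam) (h : GoodEnd a (rate d M₁ lam) R) (hρK : ρ ≤ K) (hKR : K < R)
    (hRK : R ≤ K + ρ) {z₀ : X d} (hmax : ∀ x, u x ≤ u z₀) (hz₀ : l1 (g ρ - z₀) ≤ ρ) (x : X d) :
    pathSum w u K x ≤ (exp (ρ * (2 * M₀ + rate d M₁ lam)) + exp (ρ * M₀) * (1 - exp (-lam))⁻¹) *
      pathSum w u K (g K) := by
  have hsplit := pathSum_le_last_visit hu hmax hw.le_off K x
  have hfirst := mul_pow_le_of_goodEnd hu hw hM₁ hlam h hρK hKR hRK hz₀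
  have hlast := sum_pow_mul_pathSum_le (ρ := ρ) hu hw hM₁ hlam h hKR hRK
  linarith

noncomputable def ratioConst (d ρ : ℕ) (M₀ M₁ lam : ℝ) : ℝ :=
  exp (ρ * M₀) * ((2 * d + 1) * exp M₀) ^ ρ *
    (exp (ρ * (2 * M₀ + rate d M₁ lam)) + exp (ρ * M₀) * (1 - exp (-lam))⁻¹)

lemma inv_one_sub_exp_neg_pos (hlam : 0 < lam) : 0 < (1 - exp (-lam))⁻¹ :=
  inv_pos.2 (sub_pos.2 (exp_lt_one_iff.2 (neg_lt_zero.2 hlam)))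

lemma one_le_ratioConst (hM₀ : 0 ≤ M₀) (hM₁ : 0 ≤ M₁) (hlam : 0 < lam) :
    1 ≤ ratioConst d ρ M₀ M₁ lam := by
  have hρM₀ : 0 ≤ (ρ : ℝ) * M₀ := by positivity
  have hstep : 1 ≤ (2 * d + 1) * exp M₀ :=
    one_le_mul_of_one_le_of_one_le (by linarith [(Nat.cast_nonneg d : (0 : ℝ) ≤ d)])
      (one_le_exp hM₀)
  have hK : 1 ≤ exp (ρ * (2 * M₀ + rate d M₁ lam)) :=
    one_le_exp (by have := rate_nonneg (d := d) hM₁ hlam.le; positivity)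
  have := inv_one_sub_exp_neg_pos hlam
  refine one_le_mul_of_one_le_of_one_le
    (one_le_mul_of_one_le_of_one_le (one_le_exp hρM₀) (one_le_pow₀ hstep)) ?_
  have : 0 ≤ exp (ρ * M₀) * (1 - exp (-lam))⁻¹ := by positivity
  linarith

lemma pathSum_le_ratioConst_mul (hu : ∀ x, 0 ≤ u x) (hw : PeaksAlong w g a M₀ M₁)
    (hM₁ : 0 ≤ M₁) (hlam : 0 < lam) (h : GoodEnd a (rate d M₁ lam) R) (hρK : ρ ≤ K)
    (hKR : K < R) (hRK : R ≤ K + ρ) {z₀ : X d} (hmax : ∀ x, u x ≤ u z₀) (hz₀pos : 0 < u z₀)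
    (hz₀ : l1 (g ρ - z₀) ≤ ρ) {y : X d} (hy : l1 (y - g K) ≤ ρ) (x : X d) :
    pathSum w u (K + ρ) x ≤ ratioConst d ρ M₀ M₁ lam * pathSum w u (K + ρ) y ∧
      0 < pathSum w u (K + ρ) y := by
  set G := pathSum w u K (g K)
  have hG : 0 < G := by
    have hfirst := mul_pow_le_of_goodEnd hu hw hM₁ hlam h hρK hKR hRK hz₀
    have : 0 < u z₀ * ((2 * d + 1) * exp M₁) ^ K := by positivity
    exact pos_of_mul_pos_right (this.trans_le hfirst) (exp_pos _).le
  have hlow : G ≤ exp (ρ * M₀) * pathSum w u (K + ρ) y :=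
    pathSum_le_exp_mul_pathSum_add hu hw.neg_le K ρ y (g K) hy
  have hup := pathSum_add_le hu hw.le
    (pathSum_le_mul_along hu hw hM₁ hlam h hρK hKR hRK hmax hz₀) ρ x
  refine ⟨?_, pos_of_mul_pos_right (hG.trans_le hlow) (exp_pos _).le⟩
  calc pathSum w u (K + ρ) x
      ≤ ((2 * d + 1) * exp M₀) ^ ρ *
          ((exp (ρ * (2 * M₀ + rate d M₁ lam)) + exp (ρ * M₀) * (1 - exp (-lam))⁻¹) * G) := hup
    _ ≤ ((2 * d + 1) * exp M₀) ^ ρ *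
          ((exp (ρ * (2 * M₀ + rate d M₁ lam)) + exp (ρ * M₀) * (1 - exp (-lam))⁻¹) *
            (exp (ρ * M₀) * pathSum w u (K + ρ) y)) := by
        have := inv_one_sub_exp_neg_pos hlam
        gcongr
    _ = ratioConst d ρ M₀ M₁ lam * pathSum w u (K + ρ) y := by
        rw [ratioConst]
        ring

end Estimates

lemma sum_Ioc_eq_sum_Icc (f : ℤ → ℝ) (m : ℤ) (j R : ℕ) :
    ∑ n ∈ Ioc j R, f (m + n) = ∑ i ∈ Icc (m + j + 1) (m + R), f i := by
  rw [← sum_image (g := fun n : ℕ => m + n) fun _ _ _ _ h => by simpa using h]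
  congr 1
  ext i
  simp only [mem_image, mem_Ioc, mem_Icc]
  constructor
  · rintro ⟨n, ⟨h1, h2⟩, rfl⟩
    omega
  · intro h
    exact ⟨(i - m).toNat, by omega, by omega⟩

lemma div_mem_Icc_of_le_mul {A B C : ℝ} (hA : 0 < A) (hB : 0 < B) (hAB : A ≤ C * B)
    (hBA : B ≤ C * A) : 1 / C ≤ A / B ∧ A / B ≤ C := by
  have hC : 0 < C := pos_of_mul_pos_left (hB.trans_le hBA) hA.le
  rw [div_le_div_iff₀ hC hB, div_le_iff₀ hB]
  constructor <;> linarith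

section Potential

variable {d : ℕ} {V : X d → ℝ} {M₀ M₁ lam : ℝ}

lemma e1_ne_zero (hd : 1 ≤ d) : e1 d ≠ 0 := fun h => by
  simpa [e1] using congrFun h ⟨0, hd⟩

lemma abs_sgn (b : Bool) : |sgn b| = 1 := by
  cases b <;> simp [sgn]

lemma peaksAlong_weight (hd : 1 ≤ d) (hM₀ : 0 ≤ M₀) (hM₁ : 0 ≤ M₁) (hM : M₁ ≤ M₀)
    (hV0 : V 0 = M₀) (hV1 : ∀ x, x ≠ 0 → |V x| ≤ M₁) (ω : ℤ → Bool) (m₁ : ℤ) :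
    PeaksAlong (weight V ω m₁) (fun n => gstar d ω (m₁ + n)) (fun n => xi M₀ M₁ ω (m₁ + n))
      M₀ M₁ where
  step _ := stepOK_gstar ω _ _
  le_along n := by
    have := (abs_le.1 (hV1 _ (e1_ne_zero hd))).2
    cases h : ω (m₁ + n)
    · simp only [weight, xi, gstar, sgn, h]
      norm_num
      linarith
    · simp [weight, xi, gstar, sgn, h, hV0]
  abs_le n x := by
    rw [weight, abs_mul, abs_sgn, mul_one]
    rcases eq_or_ne x 0 with rfl | hx
    · rw [hV0, abs_of_nonneg hM₀]
    · exact (hV1 x hx).trans hM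
  le_off n x hx := by
    rcases eq_or_ne x 0 with rfl | hx0
    · cases h : ω (m₁ + n)
      · simp only [weight, sgn, h, hV0]
        norm_num
        linarith
      · simp [gstar, h] at hx
    · have := abs_le.1 (hV1 x hx0)
      cases h : ω (m₁ + n) <;> simp [weight, sgn, h] <;> linarith

lemma Good.goodEnd {r : ℕ} {m₁ : ℤ} {N : ℕ} {ω : ℤ → Bool}
    (h : Good d M₀ M₁ lam r m₁ (m₁ + N) ω) :
    GoodEnd (fun n => xi M₀ M₁ ω (m₁ + n)) (rate d M₁ lam) (N - r) := by
  intro j hj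
  have hblock := h.2.2.2.2 (N - r - j) (by omega)
  rw [show m₁ + N - r - (N - r - j : ℕ) + 1 = m₁ + j + 1 by omega,
    show m₁ + N - r = m₁ + (N - r : ℕ) by omega] at hblock
  rwa [sum_Ioc_eq_sum_Icc]

lemma exists_max_of_le_on_ball {φ : X d → ℝ} {r : ℕ}
    (h : ∀ x, r < nm x → ∃ z, nm z ≤ r ∧ φ x ≤ φ z) : ∃ z₀, nm z₀ ≤ r ∧ ∀ x, φ x ≤ φ z₀ := by
  obtain ⟨z₀, hz₀, hmax⟩ := exists_max_image (ball d r) φ (ball_nonempty d r)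
  refine ⟨z₀, mem_ball_iff.1 hz₀, fun x => ?_⟩
  by_cases hx : nm x ≤ r
  · exact hmax x (mem_ball_iff.2 hx)
  · obtain ⟨z, hz, hxz⟩ := h x (not_le.1 hx)
    exact hxz.trans (hmax z (mem_ball_iff.2 hz))

lemma T_le_ratioConst_mul (hd : 1 ≤ d) (hM₀ : 0 ≤ M₀) (hM₁ : 0 ≤ M₁) (hM : M₁ ≤ M₀)
    (hlam : 0 < lam) (hV0 : V 0 = M₀) (hV1 : ∀ x, x ≠ 0 → |V x| ≤ M₁) {ω : ℤ → Bool}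
    {r : ℕ} {m₁ : ℤ} {N : ℕ} (hgood : Good d M₀ M₁ lam r m₁ (m₁ + N) ω)
    (hN : 2 * (d * r + 1) < N) {φ : X d → ℝ} (hφ0 : ∀ x, 0 ≤ φ x) (hφne : ∃ x, φ x ≠ 0)
    (hφr : ∀ x, r < nm x → ∃ z, nm z ≤ r ∧ φ x ≤ φ z) {y : X d} (hy : nm y ≤ r) (x : X d) :
    T V ω m₁ (m₁ + N) φ x ≤ ratioConst d (d * r + 1) M₀ M₁ lam * T V ω m₁ (m₁ + N) φ y ∧
      0 < T V ω m₁ (m₁ + N) φ y := by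
  obtain ⟨z₀, hz₀, hmax⟩ := exists_max_of_le_on_ball hφr
  have hz₀pos : 0 < φ z₀ := by
    obtain ⟨x₀, hx₀⟩ := hφne
    exact ((hφ0 x₀).lt_of_ne' hx₀).trans_le (hmax x₀)
  have hdr : r ≤ d * r := Nat.le_mul_of_pos_left r hd
  have hdist (z : X d) (hz : nm z ≤ r) (n : ℤ) :
      l1 (gstar d ω n - z) ≤ d * r + 1 ∧ l1 (z - gstar d ω n) ≤ d * r + 1 := by
    have := l1_le_of_nm_le hz
    have := l1_gstar_le (d := d) ω n
    have := l1_sub_le (gstar d ω n) z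
    have := l1_sub_le z (gstar d ω n)
    omega
  have hsplit : N = (N - (d * r + 1)) + (d * r + 1) := by omega
  obtain ⟨hle, hpos⟩ := pathSum_le_ratioConst_mul (K := N - (d * r + 1)) hφ0
    (peaksAlong_weight hd hM₀ hM₁ hM hV0 hV1 ω m₁) hM₁ hlam hgood.goodEnd (by omega) (by omega)
    (by omega) hmax hz₀pos (hdist z₀ hz₀ _).1 (hdist y hy _).2 x
  rw [T_eq_pathSum, T_eq_pathSum, hsplit]
  have hc : 0 < ((2 * (d : ℝ) + 1) ^ (N - (d * r + 1) + (d * r + 1)))⁻¹ := by positivity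
  refine ⟨?_, mul_pos hc hpos⟩
  rw [mul_left_comm]
  exact mul_le_mul_of_nonneg_left hle hc.le

end Potential

theorem statement4_general
    (d : ℕ) (hd : 1 ≤ d) (M₀ M₁ : ℝ) (hM₀ : 0 ≤ M₀) (hM₁ : 0 ≤ M₁)
    (hl0 : 0 < (M₀ - 3 * M₁) / 2 - Real.log (2 * (d : ℝ) + 1))
    (lam : ℝ) (hlam : 0 < lam)
    (r : ℕ) :
    ∃ K₂ : ℝ, 1 ≤ K₂ ∧ ∃ S : ℕ,
      ∀ (V : X d → ℝ), V 0 = M₀ → (∀ x : X d, x ≠ 0 → |V x| ≤ M₁) →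
      ∀ (ω : ℤ → Bool) (m₁ m₂ : ℤ),
        Good d M₀ M₁ lam r m₁ m₂ ω → (S : ℤ) < m₂ - m₁ →
        ∀ φ : X d → ℝ, (∀ x, 0 ≤ φ x) → BddAbove (Set.range φ) → (∃ x, φ x ≠ 0) →
          (∀ x, r < nm x → ∃ z, nm z ≤ r ∧ φ x ≤ φ z) →
          ∀ y₁ y₂ : X d, nm y₁ ≤ r → nm y₂ ≤ r →
            1 / K₂ ≤ T V ω m₁ m₂ φ y₁ / T V ω m₁ m₂ φ y₂ ∧
            T V ω m₁ m₂ φ y₁ / T V ω m₁ m₂ φ y₂ ≤ K₂ := by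
  refine ⟨ratioConst d (d * r + 1) M₀ M₁ lam, one_le_ratioConst hM₀ hM₁ hlam, 2 * (d * r + 1), ?_⟩
  intro V hV0 hV1 ω m₁ m₂ hgood hS φ hφ0 _ hφne hφr y₁ y₂ hy₁ hy₂
  obtain ⟨N, rfl⟩ := Int.le.dest hgood.1.le
  have hM : M₁ ≤ M₀ := by
    have : 0 ≤ log (2 * (d : ℝ) + 1) := log_nonneg (by linarith [(Nat.cast_nonneg d : (0 : ℝ) ≤ d)])
    linarith
  have hN : 2 * (d * r + 1) < N := by omega
  obtain ⟨h₁₂, hpos₂⟩ := T_le_ratioConst_mul hd hM₀ hM₁ hM hlam hV0 hV1 hgood hN hφ0 hφne hφr hy₂ y₁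
  obtain ⟨h₂₁, hpos₁⟩ := T_le_ratioConst_mul hd hM₀ hM₁ hM hlam hV0 hV1 hgood hN hφ0 hφne hφr hy₁ y₂
  exact div_mem_Icc_of_le_mul hpos₁ hpos₂ h₁₂ h₂₁

/-- Lemma 3.4 (boundedness in the Hilbert metric). -/
theorem statement4
    (d : ℕ) (hd : 1 ≤ d) (M₀ M₁ : ℝ) (hM₀ : 0 ≤ M₀) (hM₁ : 0 ≤ M₁)
    (hl0 : 0 < (M₀ - 3 * M₁) / 2 - Real.log (2 * (d : ℝ) + 1))
    (lam : ℝ) (hlam : 0 < lam)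
    (hlam' : lam < (M₀ - 3 * M₁) / 2 - Real.log (2 * (d : ℝ) + 1))
    (r : ℕ) :
    ∃ K₂ : ℝ, 1 ≤ K₂ ∧ ∃ S : ℕ,
      ∀ (V : X d → ℝ), V 0 = M₀ → (∀ x : X d, x ≠ 0 → |V x| ≤ M₁) →
      ∀ (ω : ℤ → Bool) (m₁ m₂ : ℤ),
        Good d M₀ M₁ lam r m₁ m₂ ω → (S : ℤ) < m₂ - m₁ →
        ∀ φ : X d → ℝ, (∀ x, 0 ≤ φ x) → BddAbove (Set.range φ) → (∃ x, φ x ≠ 0) →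
          (∀ x, r < nm x → ∃ z, nm z ≤ r ∧ φ x ≤ φ z) →
          ∀ y₁ y₂ : X d, nm y₁ ≤ r → nm y₂ ≤ r →
            1 / K₂ ≤ T V ω m₁ m₂ φ y₁ / T V ω m₁ m₂ φ y₂ ∧
            T V ω m₁ m₂ φ y₁ / T V ω m₁ m₂ φ y₂ ≤ K₂ :=
  statement4_general d hd M₀ M₁ hM₀ hM₁ hl0 lam hlam r

end BKpaper
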